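/- arXiv:2112.14054 — 3 statements merged into one kernel-verified Lean document; each statement's English description precedes it below -/
import Mathlib

section
/- Suppose α* ∈ R^D satisfies: there exist points (x̂^1,ŷ^1),...,(x̂^{D+1},ŷ^{D+1}) among the data points such that (a) |ŷ^j - Σ_d α*_d ψ_d(x̂^j)| = max_i |y^i - Σ_d α*_d ψ_d(x^i)| for all j = 1,...,D+1, and (b) 0 lies in the convex hull of the vectors sgn(ŷ^j - Σ_d α*_d ψ_d(x̂^j)) · (ψ_1(x̂^j),...,ψ_D(x̂^j)), j = 1,...,D+1. Then α* is a global minimizer of g(α) = max_i |y^i - Σ_d α_d ψ_d(x^i)|. -/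
/-!
Let `s_l` be the sign of the `l`-th extremal residual of `α*`, so `s_l r_l(α*) = g(α*)`. For any
`β`, the linear functional `v ↦ (β - α*) ⬝ᵥ v` is `0` at `0`, a point of the convex hull of the
`s_l ψ(x̂^l)`, so it is `≤ 0` at one of them. At that point the residual of `β` satisfies
`s_l r_l(β) = s_l r_l(α*) - (β - α*) ⬝ᵥ s_l ψ(x̂^l) ≥ g(α*)`, hence `g(β) ≥ |r_l(β)| ≥ g(α*)`.
-/

open Matrix

theorem Real.sign_mul_self (r : ℝ) : Real.sign r * r = |r| := by
  rcases lt_trichotomy r 0 with hr | rfl | hr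
  · rw [Real.sign_of_neg hr, abs_of_neg hr, neg_one_mul]
  · simp
  · rw [Real.sign_of_pos hr, abs_of_pos hr, one_mul]

theorem Real.abs_sign_mul_le (r x : ℝ) : |Real.sign r * x| ≤ |x| := by
  rcases Real.sign_apply_eq r with h | h | h <;> simp [h]

theorem exists_le_abs_sub_dotProduct_of_zero_mem_convexHull {τ κ : Type*} [Fintype κ]
    (y : τ → ℝ) (φ : τ → κ → ℝ) (α β : κ → ℝ) {c : ℝ}
    (hres : ∀ l, |y l - α ⬝ᵥ φ l| = c)
    (hhull : (0 : κ → ℝ) ∈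
      convexHull ℝ (Set.range fun l => Real.sign (y l - α ⬝ᵥ φ l) • φ l)) :
    ∃ l, c ≤ |y l - β ⬝ᵥ φ l| := by
  have hconc := (dotProductBilin ℝ ℝ (β - α)).concaveOn (convex_univ (𝕜 := ℝ))
  obtain ⟨_, ⟨l, rfl⟩, hl⟩ := hconc.exists_le_of_mem_convexHull (Set.subset_univ _) hhull
  set s := Real.sign (y l - α ⬝ᵥ φ l)
  simp only [dotProductBilin_apply_apply, dotProduct_zero] at hl
  refine ⟨l, ?_⟩
  calc c = s * (y l - α ⬝ᵥ φ l) := by rw [Real.sign_mul_self, hres]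
    _ ≤ s * (y l - α ⬝ᵥ φ l) - (β - α) ⬝ᵥ (s • φ l) := by linarith
    _ = s * (y l - β ⬝ᵥ φ l) := by
      rw [dotProduct_smul, sub_dotProduct, smul_eq_mul]; ring
    _ ≤ |y l - β ⬝ᵥ φ l| := (le_abs_self _).trans (Real.abs_sign_mul_le _ _)

theorem stmt4_general (n D N : ℕ) (hN : 0 < N)
    (x : Fin N → (Fin n → ℝ)) (y : Fin N → ℝ)
    (ψ : Fin D → (Fin n → ℝ) → ℝ)
    (g : (Fin D → ℝ) → ℝ)
    (hg : ∀ α, g α = Finset.univ.sup' (Finset.univ_nonempty_iff.mpr ⟨⟨0, hN⟩⟩)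
          fun i => |y i - ∑ d, α d * ψ d (x i)|)
    (αstar : Fin D → ℝ)
    (j : Fin (D + 1) → Fin N)
    (hres : ∀ l : Fin (D + 1),
      |y (j l) - ∑ d, αstar d * ψ d (x (j l))| = g αstar)
    (hhull : (0 : Fin D → ℝ) ∈ convexHull ℝ
      (Set.range fun l : Fin (D + 1) =>
        Real.sign (y (j l) - ∑ d, αstar d * ψ d (x (j l))) •
          fun d : Fin D => ψ d (x (j l)))) :
    ∀ β : Fin D → ℝ, g αstar ≤ g β := by
  intro β
  obtain ⟨l, hl⟩ := exists_le_abs_sub_dotProduct_of_zero_mem_convexHull (y ∘ j)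
    (fun l d => ψ d (x (j l))) αstar β hres hhull
  rw [hg β]
  exact hl.trans (Finset.le_sup' (fun i => |y i - ∑ d, β d * ψ d (x i)|) (Finset.mem_univ (j l)))

/-- sufficiency of the Carathéodory-type optimality condition:
`D+1` data points with extremal residuals whose signed feature vectors have `0`
in their convex hull certify that `α*` is a global minimizer. -/
theorem stmt4 (n D N : ℕ) (hN : 0 < N) (hND : D < N)
    (x : Fin N → (Fin n → ℝ)) (y : Fin N → ℝ)
    (ψ : Fin D → (Fin n → ℝ) → ℝ) (hψ : ∀ d, Continuous (ψ d))
    (g : (Fin D → ℝ) → ℝ)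
    (hg : ∀ α, g α = Finset.univ.sup' (Finset.univ_nonempty_iff.mpr ⟨⟨0, hN⟩⟩)
          fun i => |y i - ∑ d, α d * ψ d (x i)|)
    (αstar : Fin D → ℝ)
    (j : Fin (D + 1) → Fin N)
    (hres : ∀ l : Fin (D + 1),
      |y (j l) - ∑ d, αstar d * ψ d (x (j l))| = g αstar)
    (hsgn : ∀ l : Fin (D + 1), y (j l) - ∑ d, αstar d * ψ d (x (j l)) ≠ 0)
    (hhull : (0 : Fin D → ℝ) ∈ convexHull ℝ
      (Set.range fun l : Fin (D + 1) =>
        Real.sign (y (j l) - ∑ d, αstar d * ψ d (x (j l))) •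
          fun d : Fin D => ψ d (x (j l)))) :
    ∀ β : Fin D → ℝ, g αstar ≤ g β :=
  stmt4_general n D N hN x y ψ g hg αstar j hres hhull
end

section
/- If α* is a global minimizer of g(α) = max_i |y^i - Σ_d α_d ψ_d(x^i)| and g(α*) > 0, then there exist at most D+1 data points (x̂^j, ŷ^j) with |ŷ^j - Σ_d α*_d ψ_d(x̂^j)| = g(α*) such that 0 lies in the convex hull of the signed feature vectors sgn(ŷ^j - Σ_d α*_d ψ_d(x̂^j)) · ψ(x̂^j). -/
/-- necessity: at a global minimizer with positive value, at most
`D+1` extremal data points suffice so that `0` lies in the convex hull of their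
signed feature vectors. -/
theorem stmt5 (n D N : ℕ) (hN : 0 < N)
    (x : Fin N → (Fin n → ℝ)) (y : Fin N → ℝ)
    (ψ : Fin D → (Fin n → ℝ) → ℝ)
    (g : (Fin D → ℝ) → ℝ)
    (hg : ∀ α, g α = Finset.univ.sup' (Finset.univ_nonempty_iff.mpr ⟨⟨0, hN⟩⟩)
          fun i => |y i - ∑ d, α d * ψ d (x i)|)
    (αstar : Fin D → ℝ)
    (hmin : ∀ β, g αstar ≤ g β) (hpos : 0 < g αstar) :
    ∃ (k : ℕ), k ≤ D + 1 ∧ ∃ j : Fin k → Fin N,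
      (∀ l, |y (j l) - ∑ d, αstar d * ψ d (x (j l))| = g αstar) ∧
      (0 : Fin D → ℝ) ∈ convexHull ℝ
        (Set.range fun l : Fin k =>
          Real.sign (y (j l) - ∑ d, αstar d * ψ d (x (j l))) •
            fun d : Fin D => ψ d (x (j l))) := by
  classical
  set G := g αstar with hG
  set r : Fin N → ℝ := fun i => y i - ∑ d, αstar d * ψ d (x i) with hr
  set ψv : Fin N → (Fin D → ℝ) := fun i => fun d => ψ d (x i) with hψv
  set w : Fin N → (Fin D → ℝ) := fun i => Real.sign (r i) • ψv i with hw
  have hne : (Finset.univ : Finset (Fin N)).Nonempty :=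
    Finset.univ_nonempty_iff.mpr ⟨⟨0, hN⟩⟩
  have hrle : ∀ i, |r i| ≤ G := by
    intro i
    rw [hG, hg]
    exact Finset.le_sup' (fun i => |y i - ∑ d, αstar d * ψ d (x i)|) (Finset.mem_univ i)
  set A : Finset (Fin N) := Finset.univ.filter (fun i => |r i| = G) with hA
  -- active set is nonempty
  have hAne : A.Nonempty := by
    obtain ⟨i, _, hi⟩ := Finset.exists_mem_eq_sup' hne (fun i => |r i|)
    exact ⟨i, Finset.mem_filter.mpr ⟨Finset.mem_univ i, by rw [hG, hg]; exact hi.symm⟩⟩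
  -- key claim: 0 ∈ convexHull of signed feature vectors of active points
  have h0 : (0 : Fin D → ℝ) ∈ convexHull ℝ (↑(A.image w) : Set (Fin D → ℝ)) := by
    by_contra hnot
    obtain ⟨f, u, hfu, hub⟩ :=
      geometric_hahn_banach_point_closed
        (convex_convexHull ℝ _)
        ((A.image w).finite_toSet.isClosed_convexHull (𝕜 := ℝ)) hnot
    have hf0 : f (0 : Fin D → ℝ) = 0 := map_zero f
    have hu : 0 < u := by rw [hf0] at hfu; exact hfu
    have hfw : ∀ i ∈ A, u < f (w i) := by
      intro i hi
      exact hub _ (subset_convexHull ℝ _ (by exact_mod_cast Finset.mem_image_of_mem w hi))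
    -- f applied to a vector equals the corresponding linear combination
    have hflin : ∀ v : Fin D → ℝ, f v = ∑ d, v d * f (fun j => if d = j then 1 else 0) := by
      intro v
      conv_lhs => rw [pi_eq_sum_univ v, map_sum]
      refine Finset.sum_congr rfl fun d _ => ?_
      rw [map_smul, smul_eq_mul]
    set uvec : Fin D → ℝ := fun d => f (fun j => if d = j then 1 else 0) with huvec
    -- bound M
    set M : ℝ := 1 + Finset.univ.sup' hne (fun i => |f (ψv i)|) with hM
    have hM1 : ∀ i, |f (ψv i)| ≤ M - 1 := by
      intro i
      have := Finset.le_sup' (fun i => |f (ψv i)|) (Finset.mem_univ i)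
      linarith
    have hMpos : 0 < M := by
      have := hM1 ⟨0, hN⟩
      have h0' : (0:ℝ) ≤ |f (ψv ⟨0, hN⟩)| := abs_nonneg _
      linarith
    -- step sizes
    set T : Fin N → ℝ := fun i => if |r i| = G then G / M else (G - |r i|) / (2 * M) with hT
    have hTpos : ∀ i, 0 < T i := by
      intro i
      by_cases hi : |r i| = G
      · simp only [hT, hi, if_pos]
        exact div_pos hpos hMpos
      · simp only [hT, hi, if_neg, not_false_iff]
        have h' : |r i| < G := lt_of_le_of_ne (hrle i) hi
        apply div_pos (by linarith) (by linarith)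
    set t : ℝ := Finset.univ.inf' hne T with ht
    have htpos : 0 < t := by
      rw [ht, Finset.lt_inf'_iff]
      exact fun i _ => hTpos i
    have htle : ∀ i, t ≤ T i := fun i => Finset.inf'_le T (Finset.mem_univ i)
    -- perturbed coefficients
    set β : Fin D → ℝ := fun d => αstar d + t * uvec d with hβ
    have hres : ∀ i, y i - ∑ d, β d * ψ d (x i) = r i - t * f (ψv i) := by
      intro i
      have : f (ψv i) = ∑ d, ψv i d * uvec d := hflin (ψv i)
      rw [this]
      simp only [hβ, hr, hψv]
      rw [Finset.mul_sum]
      rw [show (∑ d, (αstar d + t * uvec d) * ψ d (x i)) =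
          (∑ d, αstar d * ψ d (x i)) + ∑ d, t * (ψ d (x i) * uvec d) by
        rw [← Finset.sum_add_distrib]; exact Finset.sum_congr rfl fun d _ => by ring]
      ring
    -- show g β < G for contradiction
    have hlt : g β < G := by
      rw [hg, Finset.sup'_lt_iff]
      intro i _
      rw [hres i]
      by_cases hi : |r i| = G
      · -- active point
        have hiA : i ∈ A := Finset.mem_filter.mpr ⟨Finset.mem_univ i, hi⟩
        have hrne : r i ≠ 0 := by
          intro h; rw [h] at hi; simp at hi; exact absurd hi.symm (ne_of_gt hpos)
        have hsign : Real.sign (r i) * Real.sign (r i) = 1 := by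
          rcases lt_or_gt_of_ne hrne with h | h
          · rw [Real.sign_of_neg h]; norm_num
          · rw [Real.sign_of_pos h]; norm_num
        have hrs : r i = Real.sign (r i) * G := by
          rcases lt_or_gt_of_ne hrne with h | h
          · rw [Real.sign_of_neg h]; rw [← hi, abs_of_neg h]; ring
          · rw [Real.sign_of_pos h]; rw [← hi, abs_of_pos h]; ring
        have hfψ : f (ψv i) = Real.sign (r i) * f (w i) := by
          have : f (w i) = Real.sign (r i) * f (ψv i) := by
            rw [hw]; simp [map_smul, smul_eq_mul]
          rw [this, ← mul_assoc, hsign, one_mul]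
        have hfwi : u < f (w i) := hfw i hiA
        have habs : |Real.sign (r i)| = 1 := by
          rcases lt_or_gt_of_ne hrne with h | h
          · rw [Real.sign_of_neg h]; norm_num
          · rw [Real.sign_of_pos h]; norm_num
        have hfwM : f (w i) ≤ M := by
          have h1 : |f (w i)| = |f (ψv i)| := by
            have : f (w i) = Real.sign (r i) * f (ψv i) := by
              rw [hw]; simp [map_smul, smul_eq_mul]
            rw [this, abs_mul, habs, one_mul]
          have := hM1 i
          have := le_abs_self (f (w i))
          linarith
        have key : r i - t * f (ψv i) = Real.sign (r i) * (G - t * f (w i)) := by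
          linear_combination hrs - t * hfψ
        rw [key, abs_mul, habs, one_mul]
        have htT : t ≤ G / M := by
          have h := htle i; simp only [hT] at h; rwa [if_pos hi] at h
        have h1 : t * f (w i) ≤ G := by
          calc t * f (w i) ≤ t * M := by
                exact mul_le_mul_of_nonneg_left hfwM (le_of_lt htpos)
            _ ≤ (G / M) * M := by exact mul_le_mul_of_nonneg_right htT (le_of_lt hMpos)
            _ = G := by field_simp
        have h2 : 0 < t * f (w i) := mul_pos htpos (lt_trans hu hfwi)
        rw [abs_of_nonneg (by linarith)]
        linarith
      · -- inactive point
        have hilt : |r i| < G := lt_of_le_of_ne (hrle i) hi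
        have htT : t ≤ (G - |r i|) / (2 * M) := by
          have h := htle i; simp only [hT] at h; rwa [if_neg hi] at h
        have h1 : t * |f (ψv i)| ≤ (G - |r i|) / 2 := by
          calc t * |f (ψv i)| ≤ t * M := by
                have := hM1 i
                exact mul_le_mul_of_nonneg_left (by linarith) (le_of_lt htpos)
            _ ≤ ((G - |r i|) / (2 * M)) * M :=
                mul_le_mul_of_nonneg_right htT (le_of_lt hMpos)
            _ = (G - |r i|) / 2 := by field_simp
        calc |r i - t * f (ψv i)| ≤ |r i| + |t * f (ψv i)| := abs_sub _ _
          _ = |r i| + t * |f (ψv i)| := by rw [abs_mul, abs_of_pos htpos]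
          _ ≤ |r i| + (G - |r i|) / 2 := by linarith
          _ < G := by linarith
    exact absurd (hmin β) (not_le.mpr hlt)
  -- Carathéodory
  rw [convexHull_eq_union] at h0
  simp only [Set.mem_iUnion] at h0
  obtain ⟨s, hs1, hs2, hs3⟩ := h0
  refine ⟨s.card, ?_, ?_⟩
  · -- cardinality bound
    have h1 : Fintype.card ↥s ≤
        Module.finrank ℝ (vectorSpan ℝ (Set.range ((↑) : s → (Fin D → ℝ)))) + 1 :=
      hs2.card_le_finrank_succ
    have h2 : Module.finrank ℝ (vectorSpan ℝ (Set.range ((↑) : s → (Fin D → ℝ)))) ≤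
        Module.finrank ℝ (Fin D → ℝ) := Submodule.finrank_le _
    rw [Module.finrank_fin_fun] at h2
    rw [Fintype.card_coe] at h1
    omega
  · -- choose preimages
    have hchoice : ∀ e ∈ s, ∃ i ∈ A, w i = e := by
      intro e he
      have := hs1 he
      simp only [Finset.coe_image, Set.mem_image, Finset.mem_coe] at this
      obtain ⟨i, hi, hwi⟩ := this
      exact ⟨i, hi, hwi⟩
    set e : Fin s.card ≃ s := s.equivFin.symm with he
    set j : Fin s.card → Fin N :=
      fun l => (hchoice (e l) (e l).2).choose with hj
    have hjA : ∀ l, j l ∈ A := fun l => (hchoice (e l) (e l).2).choose_spec.1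
    have hjw : ∀ l, w (j l) = (e l : Fin D → ℝ) :=
      fun l => (hchoice (e l) (e l).2).choose_spec.2
    refine ⟨j, ?_, ?_⟩
    · intro l
      have := hjA l
      rw [hA, Finset.mem_filter] at this
      exact this.2
    · have hsub : (↑s : Set (Fin D → ℝ)) ⊆ Set.range fun l : Fin s.card => w (j l) := by
        intro v hv
        refine ⟨e.symm ⟨v, hv⟩, ?_⟩
        show w (j (e.symm ⟨v, hv⟩)) = v
        rw [hjw (e.symm ⟨v, hv⟩)]
        simp
      have := convexHull_mono hsub hs3
      exact this
end

section
/- Let g_k : R^D → R, k ∈ N, be defined by g_k(α) = max_{i=1,...,N} |y_k^i - Σ_d α_d ψ_d(x_k^i)| for data ((x_k^i, y_k^i))_i converging (as k → ∞, for each i) to ((x^i, y^i))_i, where ψ_d are continuous. If α_k minimizes g_k for each k and α_k → α*, then α* minimizes g(α) = max_i |y^i - Σ_d α_d ψ_d(x^i)|. -/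
/-- stability of discrete best uniform approximation: if the data
converge and minimizers of the perturbed problems converge, the limit minimizes
the limit problem. -/
theorem stmt8 (n D N : ℕ) (hN : 0 < N)
    (ψ : Fin D → (Fin n → ℝ) → ℝ) (hψ : ∀ d, Continuous (ψ d))
    (xk : ℕ → Fin N → (Fin n → ℝ)) (yk : ℕ → Fin N → ℝ)
    (x : Fin N → (Fin n → ℝ)) (y : Fin N → ℝ)
    (hx : ∀ i, Filter.Tendsto (fun k => xk k i) Filter.atTop (nhds (x i)))
    (hy : ∀ i, Filter.Tendsto (fun k => yk k i) Filter.atTop (nhds (y i)))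
    (αk : ℕ → Fin D → ℝ) (αstar : Fin D → ℝ)
    (hαmin : ∀ k (β : Fin D → ℝ),
      (Finset.univ.sup' (Finset.univ_nonempty_iff.mpr ⟨⟨0, hN⟩⟩)
        fun i => |yk k i - ∑ d, αk k d * ψ d (xk k i)|)
      ≤ (Finset.univ.sup' (Finset.univ_nonempty_iff.mpr ⟨⟨0, hN⟩⟩)
        fun i => |yk k i - ∑ d, β d * ψ d (xk k i)|))
    (hα : Filter.Tendsto αk Filter.atTop (nhds αstar)) :
    ∀ β : Fin D → ℝ,
      (Finset.univ.sup' (Finset.univ_nonempty_iff.mpr ⟨⟨0, hN⟩⟩)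
        fun i => |y i - ∑ d, αstar d * ψ d (x i)|)
      ≤ (Finset.univ.sup' (Finset.univ_nonempty_iff.mpr ⟨⟨0, hN⟩⟩)
        fun i => |y i - ∑ d, β d * ψ d (x i)|) := by
  intro β
  have hne : (Finset.univ : Finset (Fin N)).Nonempty :=
    Finset.univ_nonempty_iff.mpr ⟨⟨0, hN⟩⟩
  have hαd : ∀ d, Filter.Tendsto (fun k => αk k d) Filter.atTop (nhds (αstar d)) := by
    intro d
    exact ((continuous_apply d).tendsto αstar).comp hα
  have hL : Filter.Tendsto
      (fun k => Finset.univ.sup' hne fun i => |yk k i - ∑ d, αk k d * ψ d (xk k i)|)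
      Filter.atTop
      (nhds (Finset.univ.sup' hne fun i => |y i - ∑ d, αstar d * ψ d (x i)|)) := by
    apply Filter.Tendsto.finset_sup'_nhds_apply hne
    intro i _
    apply Filter.Tendsto.abs
    exact (hy i).sub (tendsto_finset_sum _ fun d _ =>
      (hαd d).mul (((hψ d).tendsto _).comp (hx i)))
  have hR : Filter.Tendsto
      (fun k => Finset.univ.sup' hne fun i => |yk k i - ∑ d, β d * ψ d (xk k i)|)
      Filter.atTop
      (nhds (Finset.univ.sup' hne fun i => |y i - ∑ d, β d * ψ d (x i)|)) := by
    apply Filter.Tendsto.finset_sup'_nhds_apply hne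
    intro i _
    apply Filter.Tendsto.abs
    exact (hy i).sub (tendsto_finset_sum _ fun d _ =>
      tendsto_const_nhds.mul (((hψ d).tendsto _).comp (hx i)))
  exact le_of_tendsto_of_tendsto' hL hR (fun k => hαmin k β)
end
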